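/- Let x₀ > 0 and let s : [0, x₀] → ℝ be an integrable function satisfying ∫_0^X s(x) dx ≤ X·s(X) for all X ∈ (0, x₀]. Let h : [0, x₀] → ℝ be a monotone decreasing integrable function such that s·h is integrable, and set c = ∫_0^{x₀} h(x) dx. Then ∫_0^{x₀} s(x) h(x) dx ≤ (c/x₀) ∫_0^{x₀} s(x) dx; that is, among all decreasing h with ∫_0^{x₀} h = c, the constant function h ≡ c/x₀ maximizes ∫_0^{x₀} s h. -/

import Mathlib

/-!
Let `m = x₀⁻¹ ∫₀^{x₀} s`. The hypothesis says that the a.e. derivative `(X s(X) - ∫₀^X s) / X²`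
of the absolutely continuous running average `X⁻¹ ∫₀^X s` is nonnegative, so the average increases
and `∫₀^y (s - m) ≤ 0` for all `y ∈ [0, x₀]`, with equality at `y = x₀`. The superlevel sets of the
nonnegative antitone function `h - h(x₀)` are initial segments of `[0, x₀]`, so slicing along them
writes `∫ (s - m) (h - h(x₀))` as an integral of such partial integrals of `s - m`; hence it is
`≤ 0`, and since `∫₀^{x₀} (s - m) = 0` this says `∫ s h ≤ m ∫ h` (an integral form of Abel's
inequality).
-/

open MeasureTheory Set

theorem AbsolutelyContinuousOnInterval.le_of_ae_deriv_nonneg {f : ℝ → ℝ} {a b : ℝ}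
    (hab : a ≤ b) (hf : AbsolutelyContinuousOnInterval f a b)
    (hf' : ∀ᵐ x, x ∈ Icc a b → 0 ≤ deriv f x) : f a ≤ f b := by
  rw [← sub_nonneg, ← hf.integral_deriv_eq_sub]
  exact intervalIntegral.integral_nonneg_of_ae_restrict hab
    ((ae_restrict_iff' measurableSet_Icc).2 hf')

theorem monotoneOn_intervalIntegral_div {s : ℝ → ℝ} {b : ℝ}
    (hs_int : IntervalIntegrable s volume 0 b)
    (hs : ∀ X ∈ Ioc 0 b, ∫ x in 0..X, s x ≤ X * s X) :
    MonotoneOn (fun X => (∫ x in 0..X, s x) / X) (Ioc 0 b) := by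
  intro a ha c hc hac
  have hsub : uIcc a c ⊆ uIcc 0 b := by
    rw [uIcc_of_le hac, uIcc_of_le (ha.1.le.trans ha.2)]
    exact Icc_subset_Icc ha.1.le hc.2
  have hpos : ∀ x ∈ uIcc a c, 0 < x := fun x hx => ha.1.trans_le (uIcc_of_le hac ▸ hx).1
  have hS_ac : AbsolutelyContinuousOnInterval (fun X => ∫ x in 0..X, s x) a c :=
    (hs_int.absolutelyContinuousOnInterval_intervalIntegral left_mem_uIcc).mono hsub
  have hinv_ac : AbsolutelyContinuousOnInterval (fun X : ℝ => X⁻¹) a c :=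
    ((contDiffOn_inv ℝ).mono fun x hx => (hpos x hx).ne').absolutelyContinuousOnInterval
  simp only [div_eq_mul_inv]
  refine (hS_ac.fun_mul hinv_ac).le_of_ae_deriv_nonneg hac ?_
  filter_upwards [hs_int.ae_hasDerivAt_integral] with x hderiv hx
  have hx_pos : 0 < x := hpos x (uIcc_of_le hac ▸ hx)
  have hx_mem : x ∈ Ioc 0 b := ⟨hx_pos, hx.2.trans hc.2⟩
  have hS := hderiv (hsub (by rwa [uIcc_of_le hac])) 0 left_mem_uIcc
  rw [(hS.fun_mul (hasDerivAt_inv hx_pos.ne')).deriv]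
  have hderiv_eq : s x * x⁻¹ + (∫ t in 0..x, s t) * -(x ^ 2)⁻¹
      = (x * s x - ∫ t in 0..x, s t) / x ^ 2 := by
    field_simp
    ring
  rw [hderiv_eq]
  exact div_nonneg (sub_nonneg.2 (hs x hx_mem)) (sq_nonneg x)

theorem intervalIntegral_le_mul_div_of_le_mul {s : ℝ → ℝ} {b y : ℝ}
    (hs_int : IntervalIntegrable s volume 0 b)
    (hs : ∀ X ∈ Ioc 0 b, ∫ x in 0..X, s x ≤ X * s X) (hy : y ∈ Icc 0 b) :
    ∫ x in 0..y, s x ≤ y * ((∫ x in 0..b, s x) / b) := by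
  rcases hy.1.eq_or_lt with rfl | hy_pos
  · simp
  rw [← div_le_iff₀' hy_pos]
  exact monotoneOn_intervalIntegral_div hs_int hs ⟨hy_pos, hy.2⟩ ⟨hy_pos.trans_le hy.2, le_rfl⟩
    hy.2

theorem exists_ae_eq_Ioc_of_subset_Icc {μ : Measure ℝ} [NullSingletonClass μ] {S : Set ℝ}
    {a b : ℝ} (hab : a ≤ b) (hS : S ⊆ Icc a b) (hlower : ∀ x ∈ S, Icc a x ⊆ S) :
    ∃ c ∈ Icc a b, S =ᵐ[μ] Ioc a c := by
  have hbdd : ∀ x ∈ insert a S, x ≤ b := by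
    rintro x (rfl | hx)
    exacts [hab, (hS hx).2]
  set c := sSup (insert a S)
  have hS_sub : S ⊆ Icc a c := fun x hx =>
    ⟨(hS hx).1, le_csSup ⟨b, hbdd⟩ (mem_insert_of_mem a hx)⟩
  have hsub_S : Ico a c ⊆ S := by
    intro y hy
    obtain ⟨x, hx, hyx⟩ := exists_lt_of_lt_csSup (insert_nonempty a S) hy.2
    rcases hx with rfl | hx
    · exact absurd hy.1 hyx.not_ge
    · exact hlower x hx ⟨hy.1, hyx.le⟩
  refine ⟨c, ⟨le_csSup ⟨b, hbdd⟩ (mem_insert a S), csSup_le (insert_nonempty a S) hbdd⟩, ?_⟩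
  have hS_Icc : S =ᵐ[μ] Icc a c :=
    hS_sub.eventuallyLE.antisymm (Ico_ae_eq_Icc.symm.le.trans hsub_S.eventuallyLE)
  exact hS_Icc.trans Ioc_ae_eq_Icc.symm

theorem integral_mul_eq_integral_setIntegral_lt {α : Type*} [MeasurableSpace α] {μ : Measure α}
    [SFinite μ] {r g : α → ℝ} (hr : AEStronglyMeasurable r μ) (hg : Measurable g)
    (hg_nonneg : ∀ x, 0 ≤ g x) (hrg : Integrable (fun x => r x * g x) μ) :
    ∫ x, r x * g x ∂μ = ∫ t in Ioi 0, ∫ x in {x | t < g x}, r x ∂μ := by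
  set ν := volume.restrict (Ioi (0 : ℝ))
  set F : α × ℝ → ℝ := fun p => (Iio (g p.1)).indicator (fun _ => r p.1) p.2
  have hvolume : ∀ x, ν (Iio (g x)) = ENNReal.ofReal (g x) := fun x => by
    rw [Measure.restrict_apply measurableSet_Iio, Iio_inter_Ioi, Real.volume_Ioo, sub_zero]
  have hsection : ∀ (x : α) (c : ℝ), ∫ t, (Iio (g x)).indicator (fun _ => c) t ∂ν = c * g x :=
    fun x c => by
      rw [MeasureTheory.integral_indicator measurableSet_Iio, setIntegral_const, measureReal_def,
        hvolume, ENNReal.toReal_ofReal (hg_nonneg x), smul_eq_mul, mul_comm]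
  have hF_meas : AEStronglyMeasurable F (μ.prod ν) :=
    hr.comp_fst.indicator (measurableSet_lt measurable_snd (hg.comp measurable_fst))
  have hF : Integrable F (μ.prod ν) := by
    refine (integrable_prod_iff hF_meas).2 ⟨ae_of_all _ fun x => ?_, ?_⟩
    · change Integrable ((Iio (g x)).indicator fun _ => r x) ν
      refine (integrable_indicator_iff measurableSet_Iio).2 (integrableOn_const (μ := ν) ?_)
      rw [hvolume]
      exact ENNReal.ofReal_ne_top
    · refine hrg.norm.congr (ae_of_all _ fun x => ?_)
      have : (fun t => ‖F (x, t)‖) = (Iio (g x)).indicator (fun _ => ‖r x‖) := by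
        ext t
        simp only [F, norm_indicator_eq_indicator_norm]
      simp only [this, hsection, norm_mul, Real.norm_of_nonneg (hg_nonneg x)]
  have hinner : ∀ t, ∫ x, F (x, t) ∂μ = ∫ x in {x | t < g x}, r x ∂μ := fun t => by
    rw [← MeasureTheory.integral_indicator (measurableSet_lt measurable_const hg)]
    rfl
  calc ∫ x, r x * g x ∂μ = ∫ x, ∫ t, F (x, t) ∂ν ∂μ := by simp only [F, hsection]
    _ = ∫ t, ∫ x, F (x, t) ∂μ ∂ν := integral_integral_swap hF
    _ = ∫ t in Ioi 0, ∫ x in {x | t < g x}, r x ∂μ := by simp only [hinner]; rfl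

theorem setIntegral_mul_nonpos_of_antitoneOn {r g : ℝ → ℝ} {a b : ℝ} (hab : a ≤ b)
    (hr : AEStronglyMeasurable r (volume.restrict (Icc a b)))
    (hg : AntitoneOn g (Icc a b)) (hgb : 0 ≤ g b)
    (hrg : IntegrableOn (fun x => r x * g x) (Icc a b))
    (hpartial : ∀ y ∈ Icc a b, ∫ x in a..y, r x ≤ 0) :
    ∫ x in Icc a b, r x * g x ≤ 0 := by
  set G : ℝ → ℝ := fun x => g (projIcc a b hab x)
  have hG_anti : Antitone G := fun x y hxy =>
    hg (projIcc a b hab x).2 (projIcc a b hab y).2 (monotone_projIcc hab hxy)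
  have hG_eq : EqOn G g (Icc a b) := fun x hx => by simp only [G, projIcc_of_mem hab hx]
  have hG_nonneg : ∀ x, 0 ≤ G x := fun x =>
    hgb.trans (hg (projIcc a b hab x).2 (right_mem_Icc.2 hab) (projIcc a b hab x).2.2)
  have hrG : ∫ x in Icc a b, r x * g x = ∫ x in Icc a b, r x * G x :=
    setIntegral_congr_fun measurableSet_Icc fun x hx => by rw [hG_eq hx]
  rw [hrG, integral_mul_eq_integral_setIntegral_lt hr hG_anti.measurable hG_nonneg
    (hrg.congr_fun (fun x hx => by rw [hG_eq hx]) measurableSet_Icc)]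
  refine integral_nonpos fun t => ?_
  rw [Measure.restrict_restrict (measurableSet_lt measurable_const hG_anti.measurable)]
  obtain ⟨c, hc, hae⟩ := exists_ae_eq_Ioc_of_subset_Icc (μ := volume) hab inter_subset_right
    fun x (hx : x ∈ {x | t < G x} ∩ Icc a b) y hy =>
      ⟨hx.1.trans_le (hG_anti hy.2), hy.1, hy.2.trans hx.2.2⟩
  rw [setIntegral_congr_set hae, ← intervalIntegral.integral_of_le hc.1]
  exact hpartial c hc

theorem intervalIntegral_mul_nonpos_of_antitoneOn {r g : ℝ → ℝ} {a b : ℝ} (hab : a ≤ b)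
    (hr : IntegrableOn r (Icc a b)) (hg : AntitoneOn g (Icc a b))
    (hrg : IntegrableOn (fun x => r x * g x) (Icc a b))
    (hpartial : ∀ y ∈ Icc a b, ∫ x in a..y, r x ≤ 0) (htotal : ∫ x in a..b, r x = 0) :
    ∫ x in a..b, r x * g x ≤ 0 := by
  have hshift := setIntegral_mul_nonpos_of_antitoneOn hab hr.aestronglyMeasurable
    (g := fun x => g x - g b) (fun x hx y hy hxy => sub_le_sub_right (hg hx hy hxy) _)
    (sub_self _).ge ((hrg.sub (hr.mul_const (g b))).congr_fun
      (fun x _ => (mul_sub _ _ _).symm) measurableSet_Icc) hpartial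
  have htotal' : ∫ x in Icc a b, r x = 0 := by
    rwa [integral_Icc_eq_integral_Ioc, ← intervalIntegral.integral_of_le hab]
  simp only [mul_sub] at hshift
  rwa [integral_sub hrg (hr.mul_const _), integral_mul_const, htotal', zero_mul, sub_zero,
    integral_Icc_eq_integral_Ioc, ← intervalIntegral.integral_of_le hab] at hshift

/-- Among all decreasing functions `h` on `[0, x₀]` with `∫ h = c`, the constant
function `c/x₀` maximizes `∫ s·h`, provided `∫_0^X s ≤ X·s(X)` for all `X ∈ (0, x₀]`. -/
theorem decreasing_rearrangement_lemma
    (x₀ : ℝ) (hx₀ : 0 < x₀) (s h : ℝ → ℝ)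
    (hs_int : IntegrableOn s (Set.Icc 0 x₀))
    (hs : ∀ X ∈ Set.Ioc (0:ℝ) x₀, (∫ x in (0:ℝ)..X, s x) ≤ X * s X)
    (hh_anti : AntitoneOn h (Set.Icc 0 x₀))
    (hh_int : IntegrableOn h (Set.Icc 0 x₀))
    (hsh_int : IntegrableOn (fun x => s x * h x) (Set.Icc 0 x₀))
    (c : ℝ) (hc : c = ∫ x in (0:ℝ)..x₀, h x) :
    (∫ x in (0:ℝ)..x₀, s x * h x) ≤ (c / x₀) * ∫ x in (0:ℝ)..x₀, s x := by
  have hs_ii : IntervalIntegrable s volume 0 x₀ :=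
    (intervalIntegrable_iff_integrableOn_Icc_of_le hx₀.le).2 hs_int
  set m := (∫ x in 0..x₀, s x) / x₀
  have hpartial : ∀ y ∈ Icc 0 x₀, ∫ x in 0..y, (s x - m) ≤ 0 := fun y hy => by
    rw [intervalIntegral.integral_sub (hs_ii.mono_set (uIcc_subset_uIcc_left
      (by rwa [uIcc_of_le hx₀.le]))) intervalIntegrable_const, intervalIntegral.integral_const,
      smul_eq_mul, sub_zero, sub_nonpos]
    exact intervalIntegral_le_mul_div_of_le_mul hs_ii hs hy
  have htotal : ∫ x in 0..x₀, (s x - m) = 0 := by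
    rw [intervalIntegral.integral_sub hs_ii intervalIntegrable_const,
      intervalIntegral.integral_const, smul_eq_mul, sub_zero, mul_div_cancel₀ _ hx₀.ne', sub_self]
  have hmain : ∫ x in 0..x₀, (s x - m) * h x ≤ 0 :=
    intervalIntegral_mul_nonpos_of_antitoneOn hx₀.le
      (hs_int.sub (integrableOn_const measure_Icc_lt_top.ne)) hh_anti
      ((hsh_int.sub (hh_int.const_mul m)).congr_fun (fun x _ => (sub_mul _ _ _).symm)
        measurableSet_Icc) hpartial htotal
  have hsh_ii := (intervalIntegrable_iff_integrableOn_Icc_of_le hx₀.le).2 hsh_int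
  have hh_ii := (intervalIntegrable_iff_integrableOn_Icc_of_le hx₀.le).2 hh_int
  simp only [sub_mul] at hmain
  rw [intervalIntegral.integral_sub hsh_ii (hh_ii.const_mul m), intervalIntegral.integral_const_mul,
    ← hc, sub_nonpos] at hmain
  calc ∫ x in 0..x₀, s x * h x ≤ m * c := hmain
    _ = c / x₀ * ∫ x in 0..x₀, s x := by ring
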